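/- arXiv:2512.13829 — 3 statements merged into one kernel-verified Lean document; each statement's English description precedes it below -/
import Mathlib

section
/- Let μ be a symmetric probability distribution on a group G whose support generates G as a semigroup, and suppose the spectral radius ρ(μ) = limsup_n (μ*ⁿ(e))^{1/n} is strictly less than 1 (i.e., G is non-amenable). Then ℓ∞(G) admits no μ-stationary vector pricing: there is no vector pricing r on ℓ∞(G) with r(μ*u, v) = r(u, v) for all u, v ∈ ℓ∞(G)⁺ with v ≠ 0. -/
open scoped ENNReal

/-- A vector pricing on an ordered vector space `V`: a map `r : V⁺ × V⁺ → [0, +∞]`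
satisfying additivity in the first variable (VP1), the cocycle identity when not of the
indeterminate form `0·∞` (VP2), and the normalization `r(u,u) = 1` (VP3).
It is encoded as a total map on `V × V` whose axioms are imposed on positive vectors. -/
structure VectorPricing (V : Type*) [AddCommGroup V] [PartialOrder V] [Module ℝ V] where
  r : V → V → ℝ≥0∞
  add : ∀ u v w : V, 0 ≤ u → 0 ≤ v → 0 ≤ w → w ≠ 0 → r (u + v) w = r u w + r v w
  cocycle : ∀ u v w : V, 0 ≤ u → 0 ≤ v → 0 ≤ w →
      ¬((r u v = 0 ∧ r v w = ⊤) ∨ (r u v = ⊤ ∧ r v w = 0)) → r u w = r u v * r v w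
  one : ∀ u : V, 0 ≤ u → r u u = 1


/-- The space `ℓ∞(G)` of bounded real functions on `G`, as a submodule of `G → ℝ`. -/
def linf (G : Type*) : Submodule ℝ (G → ℝ) where
  carrier := {f | ∃ C : ℝ, ∀ x, |f x| ≤ C}
  add_mem' := by
    rintro f g ⟨C, hC⟩ ⟨D, hD⟩
    exact ⟨C + D, fun x => (abs_add_le _ _).trans (add_le_add (hC x) (hD x))⟩
  zero_mem' := ⟨0, fun x => by simp⟩
  smul_mem' := by
    rintro c f ⟨C, hC⟩
    refine ⟨|c| * C, fun x => ?_⟩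
    have h : |(c • f) x| = |c| * |f x| := by
      simp [abs_mul]
    rw [h]
    exact mul_le_mul_of_nonneg_left (hC x) (abs_nonneg c)

/-- Convolution of two summable kernels on a group `G`:
`(μ * ν)(x) = Σ_s μ(s) ν(s⁻¹x)`.  Applied to `μ` and a bounded function `u`, this is the
action `μ * u = Σ_g μ(g)·(g u)` of a probability distribution on `ℓ∞(G)`. -/
noncomputable def conv {G : Type*} [Group G] (μ ν : G → ℝ) : G → ℝ :=
  fun x => ∑' s : G, μ s * ν (s⁻¹ * x)

open Classical in
/-- The `n`-fold convolution power `μ*ⁿ` of a distribution `μ` on `G`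
(with `μ*⁰ = δ_e`). -/
noncomputable def convPow {G : Type*} [Group G] (μ : G → ℝ) : ℕ → G → ℝ
  | 0 => fun x => if x = 1 then 1 else 0
  | n + 1 => conv μ (convPow μ n)

/-- The spectral radius `ρ(μ) = limsup_n (μ*ⁿ(e))^{1/n}` of a distribution on `G`. -/
noncomputable def specRad {G : Type*} [Group G] (μ : G → ℝ) : ℝ :=
  Filter.atTop.limsup fun n : ℕ => (convPow μ n 1) ^ ((n : ℝ)⁻¹)


namespace NoPricingAux
variable {G : Type*} [Group G]

open Classical in
noncomputable def delta (G : Type*) [Group G] : G → ℝ≥0∞ := fun x => if x = 1 then 1 else 0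

noncomputable def ec (f g : G → ℝ≥0∞) : G → ℝ≥0∞ := fun x => ∑' s, f s * g (s⁻¹ * x)

noncomputable def ecp (f : G → ℝ≥0∞) : ℕ → G → ℝ≥0∞
  | 0 => delta G
  | n + 1 => ec f (ecp f n)

lemma ec_delta_left (g : G → ℝ≥0∞) : ec (delta G) g = g := by
  funext x
  unfold ec delta
  rw [tsum_eq_single (1 : G) (by intro s hs; simp [hs])]
  simp

lemma ec_delta_right (g : G → ℝ≥0∞) : ec g (delta G) = g := by
  funext x
  unfold ec delta
  rw [tsum_eq_single x (by intro s hs; simp [inv_mul_eq_one, hs])]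
  simp

lemma ec_assoc (f g h : G → ℝ≥0∞) : ec f (ec g h) = ec (ec f g) h := by
  funext x
  unfold ec
  calc ∑' s, f s * ∑' t, g t * h (t⁻¹ * (s⁻¹ * x))
      = ∑' s, ∑' t, f s * (g t * h (t⁻¹ * (s⁻¹ * x))) := by
        congr 1; funext s; rw [ENNReal.tsum_mul_left]
    _ = ∑' s, ∑' u, f s * (g (s⁻¹ * u) * h (u⁻¹ * x)) := by
        congr 1; funext s
        rw [← Equiv.tsum_eq (Equiv.mulLeft s⁻¹) (fun t => f s * (g t * h (t⁻¹ * (s⁻¹ * x))))]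
        congr 1; funext u
        simp only [Equiv.coe_mulLeft, mul_inv_rev, inv_inv, mul_assoc, mul_inv_cancel_left]
    _ = ∑' u, ∑' s, f s * g (s⁻¹ * u) * h (u⁻¹ * x) := by
        rw [ENNReal.tsum_comm]; simp only [mul_assoc]
    _ = ∑' u, (∑' s, f s * g (s⁻¹ * u)) * h (u⁻¹ * x) := by
        congr 1; funext u; rw [ENNReal.tsum_mul_right]

lemma tsum_ec (f g : G → ℝ≥0∞) : ∑' x, ec f g x = (∑' s, f s) * (∑' y, g y) := by
  unfold ec
  rw [ENNReal.tsum_comm]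
  calc ∑' s, ∑' x, f s * g (s⁻¹ * x)
      = ∑' s, f s * ∑' x, g (s⁻¹ * x) := by
        congr 1; funext s; rw [ENNReal.tsum_mul_left]
    _ = ∑' s, f s * ∑' y, g y := by
        congr 1; funext s; congr 1
        exact Equiv.tsum_eq (Equiv.mulLeft s⁻¹) g
    _ = (∑' s, f s) * (∑' y, g y) := ENNReal.tsum_mul_right

lemma tsum_delta : ∑' x : G, delta G x = 1 := by
  unfold delta
  rw [tsum_eq_single (1 : G) (by intro s hs; simp [hs])]
  simp

lemma tsum_ecp {f : G → ℝ≥0∞} (hf : ∑' s, f s = 1) (n : ℕ) : ∑' x, ecp f n x = 1 := by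
  induction n with
  | zero => exact tsum_delta
  | succ n ih => rw [show ecp f (n+1) = ec f (ecp f n) from rfl, tsum_ec, hf, ih, one_mul]

lemma ecp_le_one {f : G → ℝ≥0∞} (hf : ∑' s, f s = 1) (n : ℕ) (x : G) : ecp f n x ≤ 1 :=
  (ENNReal.le_tsum x).trans (tsum_ecp hf n).le

lemma ecp_ne_top {f : G → ℝ≥0∞} (hf : ∑' s, f s = 1) (n : ℕ) (x : G) : ecp f n x ≠ ⊤ :=
  ((ecp_le_one hf n x).trans_lt ENNReal.one_lt_top).ne

lemma ecp_add (f : G → ℝ≥0∞) (n m : ℕ) : ecp f (n + m) = ec (ecp f n) (ecp f m) := by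
  induction n with
  | zero => rw [zero_add, show ecp f 0 = delta G from rfl, ec_delta_left]
  | succ n ih =>
      have : n + 1 + m = (n + m) + 1 := by omega
      rw [this, show ecp f ((n+m)+1) = ec f (ecp f (n+m)) from rfl, ih, ec_assoc]
      rfl

noncomputable def rev (f : G → ℝ≥0∞) : G → ℝ≥0∞ := fun x => f x⁻¹

lemma rev_ec (f g : G → ℝ≥0∞) : rev (ec f g) = ec (rev g) (rev f) := by
  funext x
  unfold rev ec
  rw [← Equiv.tsum_eq (Equiv.mulLeft x) (fun t => g t⁻¹ * f (t⁻¹ * x)⁻¹)]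
  congr 1; funext s
  simp only [Equiv.coe_mulLeft]
  rw [mul_comm]
  congr 2
  · group
  · group

lemma rev_delta : rev (delta G) = delta G := by
  funext x; unfold rev delta
  by_cases hx : x = 1
  · simp [hx]
  · simp [hx, inv_eq_one]

lemma ecp_one (f : G → ℝ≥0∞) : ecp f 1 = f := by
  rw [show ecp f 1 = ec f (delta G) from rfl, ec_delta_right]

lemma rev_ecp {f : G → ℝ≥0∞} (hf : rev f = f) (n : ℕ) : rev (ecp f n) = ecp f n := by
  induction n with
  | zero => exact rev_delta
  | succ n ih =>
      have h1 : ec (ecp f n) f = ec f (ecp f n) := by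
        have h2 := ecp_add f n 1
        rw [ecp_one] at h2
        rw [← h2]; rfl
      rw [show ecp f (n+1) = ec f (ecp f n) from rfl, rev_ec, ih, hf, h1]

lemma ecp_sq_le {f : G → ℝ≥0∞} (hf : rev f = f) (n : ℕ) (x : G) :
    ecp f n x ^ 2 ≤ ecp f (n + n) 1 := by
  have h := ecp_add f n n
  have : ecp f (n + n) 1 = ∑' s, ecp f n s * ecp f n (s⁻¹ * 1) := by rw [h]; rfl
  rw [this]
  refine le_trans ?_ (ENNReal.le_tsum x)
  have hx : ecp f n x⁻¹ = ecp f n x := by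
    conv_lhs => rw [← rev_ecp hf n]
    simp [rev]
  rw [mul_one, hx, sq]

end NoPricingAux

section Bridge
variable {G : Type*} [Group G]

lemma nu_tsum_one (μ : G → ℝ) (hpos : ∀ g, 0 ≤ μ g) (hsum : HasSum μ 1) :
    ∑' g, ENNReal.ofReal (μ g) = 1 := by
  rw [← ENNReal.ofReal_tsum_of_nonneg hpos hsum.summable, hsum.tsum_eq, ENNReal.ofReal_one]

lemma convPow_eq_ecp (μ : G → ℝ) (hpos : ∀ g, 0 ≤ μ g) (hsum : HasSum μ 1) (n : ℕ) (x : G) :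
    convPow μ n x = (NoPricingAux.ecp (fun g => ENNReal.ofReal (μ g)) n x).toReal := by
  have hν : ∑' g, ENNReal.ofReal (μ g) = 1 := nu_tsum_one μ hpos hsum
  induction n generalizing x with
  | zero =>
      by_cases hx : x = 1 <;>
        simp [convPow, NoPricingAux.ecp, NoPricingAux.delta, hx]
  | succ n ih =>
      show conv μ (convPow μ n) x
          = (∑' s, ENNReal.ofReal (μ s) *
              NoPricingAux.ecp (fun g => ENNReal.ofReal (μ g)) n (s⁻¹ * x)).toReal
      rw [ENNReal.tsum_toReal_eq
        (fun s => ENNReal.mul_ne_top ENNReal.ofReal_ne_top (NoPricingAux.ecp_ne_top hν n _))]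
      unfold conv
      congr 1; funext s
      rw [ih, ENNReal.toReal_mul, ENNReal.toReal_ofReal (hpos s)]

end Bridge

/-- Let `μ` be a symmetric probability distribution on a group `G` whose support generates
`G` as a semigroup, with spectral radius `ρ(μ) < 1` (i.e. `G` non-amenable).  Then
`ℓ∞(G)` admits no `μ`-stationary vector pricing. -/
theorem no_stationary_pricing_nonamenable {G : Type*} [Group G] (μ : G → ℝ)
    (hpos : ∀ g : G, 0 ≤ μ g) (hsum : HasSum μ 1)
    (hsymm : ∀ g : G, μ g = μ g⁻¹)
    (hgen : Subsemigroup.closure (Function.support μ) = ⊤)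
    (hrad : specRad μ < 1) :
    ¬∃ r : VectorPricing (linf G),
      ∀ (u v : linf G), 0 ≤ u → 0 ≤ v → v ≠ 0 →
        ∀ h : conv μ (u : G → ℝ) ∈ linf G, r.r ⟨conv μ (u : G → ℝ), h⟩ v = r.r u v := by
  classical
  rintro ⟨r, hstat⟩
  set ν : G → ℝ≥0∞ := fun g => ENNReal.ofReal (μ g) with hνdef
  have hνsum : ∑' g, ν g = 1 := nu_tsum_one μ hpos hsum
  have hνrev : NoPricingAux.rev ν = ν := by
    funext g
    show ENNReal.ofReal (μ g⁻¹) = ENNReal.ofReal (μ g)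
    rw [← hsymm g]
  -- basic facts about a n = convPow μ n 1
  have ha_eq : ∀ n x, convPow μ n x = (NoPricingAux.ecp ν n x).toReal :=
    convPow_eq_ecp μ hpos hsum
  have ha0 : ∀ n x, 0 ≤ convPow μ n x := fun n x => by
    rw [ha_eq]; exact ENNReal.toReal_nonneg
  have ha1 : ∀ n x, convPow μ n x ≤ 1 := fun n x => by
    rw [ha_eq]
    have := ENNReal.toReal_mono ENNReal.one_ne_top (NoPricingAux.ecp_le_one hνsum n x)
    simpa using this
  -- choose c with specRad μ < c < 1, 0 < c
  set c : ℝ := max (1/2) ((specRad μ + 1)/2) with hcdef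
  have hc0 : 0 < c := lt_of_lt_of_le one_half_pos (le_max_left _ _)
  have hc1 : c < 1 := max_lt one_half_lt_one (by linarith)
  have hcρ : specRad μ < c := lt_of_lt_of_le (by linarith) (le_max_right _ _)
  -- eventual bound convPow μ n 1 ≤ c ^ n
  have hbdd : Filter.IsBoundedUnder (· ≤ ·) Filter.atTop
      (fun n : ℕ => (convPow μ n 1) ^ ((n : ℝ)⁻¹)) :=
    ⟨1, Filter.eventually_map.mpr (Filter.Eventually.of_forall fun n =>
      Real.rpow_le_one (ha0 n 1) (ha1 n 1) (by positivity))⟩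
  have hev : ∀ᶠ n in Filter.atTop, (convPow μ n 1) ^ ((n : ℝ)⁻¹) < c :=
    Filter.eventually_lt_of_limsup_lt hcρ hbdd
  obtain ⟨N0, hN0⟩ := Filter.eventually_atTop.mp hev
  set N : ℕ := N0 + 1 with hNdef
  have hN : ∀ n, N ≤ n → convPow μ n 1 ≤ c ^ n := by
    intro n hn
    have h1 : (convPow μ n 1) ^ ((n : ℝ)⁻¹) < c := hN0 n (by omega)
    have hn0 : n ≠ 0 := by omega
    calc convPow μ n 1 = ((convPow μ n 1) ^ ((n : ℝ)⁻¹)) ^ n :=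
          (Real.rpow_inv_natCast_pow (ha0 n 1) hn0).symm
      _ ≤ c ^ n := pow_le_pow_left₀ (Real.rpow_nonneg (ha0 n 1) _) h1.le n
  set cE : ℝ≥0∞ := ENNReal.ofReal c with hcEdef
  have hcE0 : cE ≠ 0 := by
    simp only [hcEdef, ne_eq, ENNReal.ofReal_eq_zero, not_le]
    exact hc0
  have hcEtop : cE ≠ ⊤ := ENNReal.ofReal_ne_top
  have hcE1 : cE ≤ 1 := by
    rw [hcEdef, ← ENNReal.ofReal_one]
    exact ENNReal.ofReal_le_ofReal hc1.le
  have hecp1 : ∀ n, N ≤ n → NoPricingAux.ecp ν n 1 ≤ cE ^ n := by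
    intro n hn
    have he : NoPricingAux.ecp ν n 1 = ENNReal.ofReal (convPow μ n 1) := by
      rw [ha_eq n 1, ENNReal.ofReal_toReal (NoPricingAux.ecp_ne_top hνsum n 1)]
    rw [he, hcEdef, ← ENNReal.ofReal_pow hc0.le]
    exact ENNReal.ofReal_le_ofReal (hN n hn)
  have hecp : ∀ n, N ≤ n → ∀ x, NoPricingAux.ecp ν n x ≤ cE ^ n := by
    intro n hn x
    by_contra hlt
    push_neg at hlt
    have h2 : (cE ^ n) ^ 2 < (NoPricingAux.ecp ν n x) ^ 2 :=
      ENNReal.pow_lt_pow_left two_ne_zero hlt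
    have h3 := NoPricingAux.ecp_sq_le hνrev n x
    have h4 : NoPricingAux.ecp ν (n + n) 1 ≤ cE ^ (n + n) := hecp1 (n + n) (by omega)
    have h5 : cE ^ (n + n) = (cE ^ n) ^ 2 := by
      rw [← pow_mul, Nat.mul_comm, two_mul]
    exact absurd ((h2.trans_le h3).trans_le h4) (by rw [h5]; exact lt_irrefl _)
  set K : ℝ≥0∞ := cE⁻¹ ^ N with hKdef
  have hK1 : 1 ≤ K := one_le_pow_of_one_le' (ENNReal.one_le_inv.mpr hcE1) N
  have hKtop : K ≠ ⊤ := by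
    exact ENNReal.pow_ne_top (ENNReal.inv_ne_top.mpr hcE0)
  have hunif : ∀ n x, NoPricingAux.ecp ν n x ≤ K * cE ^ n := by
    intro n x
    rcases le_or_gt N n with h | h
    · exact (hecp n h x).trans (le_mul_of_one_le_left zero_le hK1)
    · refine (NoPricingAux.ecp_le_one hνsum n x).trans ?_
      have h1 : cE ^ N ≤ cE ^ n := pow_le_pow_of_le_one zero_le hcE1 h.le
      calc (1 : ℝ≥0∞) = cE⁻¹ ^ N * cE ^ N := by
            rw [← mul_pow, ENNReal.inv_mul_cancel hcE0 hcEtop, one_pow]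
        _ ≤ K * cE ^ n := by rw [hKdef]; exact mul_le_mul_right h1 _
  -- choose rational z with 1 < z < 1/c
  have hcinv : (1 : ℝ) < c⁻¹ := (one_lt_inv₀ hc0).mpr hc1
  obtain ⟨q0, hq1, hq2⟩ := exists_rat_btwn hcinv
  set z : ℝ := (q0 : ℝ) with hzdef
  have hz1 : 1 < z := hq1
  have hz0 : 0 ≤ z := by linarith
  have hzc : z * c < 1 := by
    have h := hq2
    rw [← one_div] at h
    exact (lt_div_iff₀ hc0).mp h
  have hq0pos : 0 < q0 := by
    have : (0:ℝ) < (q0:ℝ) := by linarith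
    exact_mod_cast this
  set p : ℕ := q0.num.toNat with hpdef
  set Q : ℕ := q0.den with hQdef
  have hQ0 : 0 < Q := q0.pos
  have hnum : (q0.num : ℝ) = (p : ℝ) := by
    rw [hpdef]
    norm_cast
    exact (Int.toNat_of_nonneg (by positivity)).symm
  have hpz : (p : ℝ) = z * Q := by
    rw [← hnum, hzdef, Rat.cast_def]
    field_simp
    rfl
  have hpQ : Q < p := by
    have h1 : (Q : ℝ) < (p : ℝ) := by
      rw [hpz]
      have : (1:ℝ) * Q < z * Q := by
        apply mul_lt_mul_of_pos_right hz1
        exact_mod_cast hQ0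
      linarith
    exact_mod_cast h1
  set zE : ℝ≥0∞ := ENNReal.ofReal z with hzEdef
  have hzEtop : zE ≠ ⊤ := ENNReal.ofReal_ne_top
  have hzcE : zE * cE < 1 := by
    rw [hzEdef, hcEdef, ← ENNReal.ofReal_mul hz0]
    exact ENNReal.ofReal_lt_one.mpr hzc
  -- the Green function
  set EG : G → ℝ≥0∞ := fun x => ∑' n : ℕ, zE ^ n * NoPricingAux.ecp ν n x with hEGdef
  set C : ℝ≥0∞ := K * (1 - zE * cE)⁻¹ with hCdef
  have hCtop : C ≠ ⊤ := by
    apply ENNReal.mul_ne_top hKtop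
    rw [ENNReal.inv_ne_top]
    rw [← pos_iff_ne_zero, tsub_pos_iff_lt]
    exact hzcE
  have hEGle : ∀ x, EG x ≤ C := by
    intro x
    calc EG x ≤ ∑' n : ℕ, zE ^ n * (K * cE ^ n) :=
          ENNReal.tsum_le_tsum fun n => mul_le_mul_right (hunif n x) _
      _ = K * ∑' n : ℕ, (zE * cE) ^ n := by
          rw [← ENNReal.tsum_mul_left]
          congr 1; funext n
          rw [mul_pow]; ring
      _ = C := by rw [ENNReal.tsum_geometric, hCdef]
  have hEGtop : ∀ x, EG x ≠ ⊤ := fun x => ((hEGle x).trans_lt (hCtop.lt_top)).ne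
  set Gz : G → ℝ := fun x => (EG x).toReal with hGzdef
  have hGz0 : ∀ x, 0 ≤ Gz x := fun x => ENNReal.toReal_nonneg
  have hGzle : ∀ x, Gz x ≤ C.toReal := fun x => ENNReal.toReal_mono hCtop (hEGle x)
  have hGmem : Gz ∈ linf G := ⟨C.toReal, fun x => by
    rw [abs_of_nonneg (hGz0 x)]; exact hGzle x⟩
  -- the convolution μ * Gz
  set EH : G → ℝ≥0∞ := fun x => ∑' s, ν s * EG (s⁻¹ * x) with hEHdef
  have hEHle : ∀ x, EH x ≤ C := by
    intro x
    calc EH x ≤ ∑' s, ν s * C := ENNReal.tsum_le_tsum fun s => mul_le_mul_right (hEGle _) _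
      _ = C := by rw [ENNReal.tsum_mul_right, hνsum, one_mul]
  have hEHtop : ∀ x, EH x ≠ ⊤ := fun x => ((hEHle x).trans_lt (hCtop.lt_top)).ne
  have hEH : ∀ x, EH x = ∑' n : ℕ, zE ^ n * NoPricingAux.ecp ν (n + 1) x := by
    intro x
    rw [hEHdef]
    calc ∑' s, ν s * EG (s⁻¹ * x)
        = ∑' s, ∑' n : ℕ, ν s * (zE ^ n * NoPricingAux.ecp ν n (s⁻¹ * x)) := by
          congr 1; funext s; rw [hEGdef, ENNReal.tsum_mul_left]
      _ = ∑' n : ℕ, ∑' s, zE ^ n * (ν s * NoPricingAux.ecp ν n (s⁻¹ * x)) := by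
          rw [ENNReal.tsum_comm]
          congr 1; funext n; congr 1; funext s; ring
      _ = ∑' n : ℕ, zE ^ n * ∑' s, ν s * NoPricingAux.ecp ν n (s⁻¹ * x) := by
          congr 1; funext n; rw [ENNReal.tsum_mul_left]
      _ = ∑' n : ℕ, zE ^ n * NoPricingAux.ecp ν (n + 1) x := rfl
  have hkey : ∀ x, zE * EH x ≤ EG x := by
    intro x
    have hsplit := tsum_eq_zero_add'
      (f := fun n : ℕ => zE ^ n * NoPricingAux.ecp ν n x) ENNReal.summable
    have h2 : EG x = NoPricingAux.ecp ν 0 x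
        + ∑' n : ℕ, zE ^ (n + 1) * NoPricingAux.ecp ν (n + 1) x := by
      rw [hEGdef]
      simpa using hsplit
    have h3 : ∑' n : ℕ, zE ^ (n + 1) * NoPricingAux.ecp ν (n + 1) x = zE * EH x := by
      rw [hEH x, ← ENNReal.tsum_mul_left]
      congr 1; funext n
      rw [pow_succ]; ring
    rw [h2, h3]
    exact le_add_self
  have hconvG : ∀ x, conv μ Gz x = (EH x).toReal := by
    intro x
    rw [hEHdef]
    rw [ENNReal.tsum_toReal_eq
      (fun s => ENNReal.mul_ne_top ENNReal.ofReal_ne_top (hEGtop _))]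
    unfold conv
    congr 1; funext s
    rw [ENNReal.toReal_mul]
    congr 1
    exact (ENNReal.toReal_ofReal (hpos s)).symm
  have hconv0 : ∀ x, 0 ≤ conv μ Gz x := fun x => by
    rw [hconvG]; exact ENNReal.toReal_nonneg
  have hmemu : conv μ Gz ∈ linf G := ⟨C.toReal, fun x => by
    rw [abs_of_nonneg (hconv0 x), hconvG]
    exact ENNReal.toReal_mono hCtop (hEHle x)⟩
  have hzle : ∀ x, z * conv μ Gz x ≤ Gz x := by
    intro x
    rw [hconvG]
    have h2 := ENNReal.toReal_mono (hEGtop x) (hkey x)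
    rwa [ENNReal.toReal_mul, hzEdef, ENNReal.toReal_ofReal hz0] at h2
  -- the pricing argument
  set gv : linf G := ⟨Gz, hGmem⟩ with hgvdef
  set uv : linf G := ⟨conv μ Gz, hmemu⟩ with huvdef
  have hgv0 : (0 : linf G) ≤ gv := fun x => hGz0 x
  have huv0 : (0 : linf G) ≤ uv := fun x => hconv0 x
  have hgvne : gv ≠ 0 := by
    intro h0
    have h1 : Gz 1 = 0 := by
      have := congrArg (fun w : linf G => (w : G → ℝ) 1) h0
      simpa [hgvdef] using this
    have h2 : (1 : ℝ≥0∞) ≤ EG 1 := by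
      have := ENNReal.le_tsum (f := fun n : ℕ => zE ^ n * NoPricingAux.ecp ν n 1) 0
      simpa [NoPricingAux.ecp, NoPricingAux.delta] using this
    have h3 : (1 : ℝ) ≤ Gz 1 := by
      have := ENNReal.toReal_mono (hEGtop 1) h2
      simpa using this
    linarith
  -- r.r 0 v = 0
  have hr0 : ∀ v : linf G, 0 ≤ v → v ≠ 0 → r.r 0 v = 0 := by
    intro v hv hvne
    have h1 := r.add v 0 v hv le_rfl hv hvne
    rw [add_zero, r.one v hv] at h1
    have h2 : (1:ℝ≥0∞) + r.r 0 v = 1 + 0 := by rw [add_zero, ← h1]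
    exact (ENNReal.add_right_inj ENNReal.one_ne_top).mp h2
  -- r.r (n • u) v = n * r.r u v
  have hsmul : ∀ (n : ℕ) (u v : linf G), 0 ≤ u → 0 ≤ v → v ≠ 0 →
      r.r (n • u) v = n * r.r u v := by
    intro n u v hu hv hvne
    induction n with
    | zero => simp [hr0 v hv hvne]
    | succ n ih =>
        have hnu : (0 : linf G) ≤ n • u := by
          intro x
          have := nsmul_nonneg hu n
          exact this x
        rw [succ_nsmul, r.add (n • u) u v hnu hu hv hvne, ih]
        push_cast
        ring
  -- monotonicity
  have hmono : ∀ u v w : linf G, 0 ≤ u → u ≤ v → 0 ≤ w → w ≠ 0 →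
      r.r u w ≤ r.r v w := by
    intro u v w hu huv hw hwne
    have h2 : (0 : linf G) ≤ v - u := by
      intro x
      have := huv x
      have hc : ((v - u : linf G) : G → ℝ) x = (v : G → ℝ) x - (u : G → ℝ) x := by simp
      rw [show ((0 : linf G) : G → ℝ) x = 0 from rfl, hc]
      linarith
    calc r.r u w ≤ r.r u w + r.r (v - u) w := le_self_add
      _ = r.r (u + (v - u)) w := (r.add u (v - u) w hu h2 hw hwne).symm
      _ = r.r v w := by rw [add_sub_cancel]
  -- stationarity gives r.r uv gv = 1
  have hstat1 : r.r uv gv = 1 := by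
    have := hstat gv gv hgv0 hgv0 hgvne hmemu
    rw [huvdef]
    rw [this, r.one gv hgv0]
  -- key inequality p • uv ≤ Q • gv
  have hle : p • uv ≤ Q • gv := by
    intro x
    have hcoe1 : ((p • uv : linf G) : G → ℝ) x = (p : ℝ) * conv μ Gz x := by
      push_cast
      simp [huvdef, nsmul_eq_mul]
    have hcoe2 : ((Q • gv : linf G) : G → ℝ) x = (Q : ℝ) * Gz x := by
      push_cast
      simp [hgvdef, nsmul_eq_mul]
    rw [hcoe1, hcoe2, hpz]
    have h1 : z * conv μ Gz x ≤ Gz x := hzle x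
    have h2 : (0:ℝ) ≤ (Q:ℝ) := by positivity
    calc z * (Q:ℝ) * conv μ Gz x = (Q:ℝ) * (z * conv μ Gz x) := by ring
      _ ≤ (Q:ℝ) * Gz x := mul_le_mul_of_nonneg_left h1 h2
  have hpuv0 : (0 : linf G) ≤ p • uv := by
    intro x
    have := nsmul_nonneg huv0 p
    exact this x
  -- conclude
  have hfinal : (p : ℝ≥0∞) ≤ (Q : ℝ≥0∞) := by
    calc (p : ℝ≥0∞) = p * r.r uv gv := by rw [hstat1, mul_one]
      _ = r.r (p • uv) gv := (hsmul p uv gv huv0 hgv0 hgvne).symm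
      _ ≤ r.r (Q • gv) gv := hmono _ _ _ hpuv0 hle hgv0 hgvne
      _ = Q * r.r gv gv := hsmul Q gv gv hgv0 hgv0 hgvne
      _ = (Q : ℝ≥0∞) := by rw [r.one gv hgv0, mul_one]
  have : p ≤ Q := by exact_mod_cast hfinal
  omega
end

section
/- Let μ be a symmetric probability distribution on a group G, let V = ℓ∞(G), and suppose J is a positive linear functional on the ideal generated by the μ-orbit of some v ≩ 0, normalized with J(v) = 1 and satisfying J(μ*u) = t·J(u) for all u in that ideal, for some t ≤ 1. Then t ≥ ρ(μ), the spectral radius of μ. -/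
/-- An ideal in an ordered vector space: a subspace closed under order-intervals. -/
def IsIdeal {V : Type*} [AddCommGroup V] [PartialOrder V] [Module ℝ V]
    (W : Submodule ℝ V) : Prop :=
  ∀ ⦃w w' v : V⦄, w ∈ W → w' ∈ W → w ≤ v → v ≤ w' → v ∈ W

/-- The ideal generated by a subset `A`: the intersection of all ideals containing `A`. -/
noncomputable def idealGen {V : Type*} [AddCommGroup V] [PartialOrder V] [Module ℝ V]
    (A : Set V) : Submodule ℝ V :=
  sInf {W : Submodule ℝ V | IsIdeal W ∧ A ⊆ W}

section WeightedSums

variable {α : Type*} {μ : α → ℝ}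

lemma summable_mul_of_nonneg_of_le (hpos : ∀ g, 0 ≤ μ g) (hμ : Summable μ)
    {w : α → ℝ} {C : ℝ} (hw : ∀ s, 0 ≤ w s) (hwC : ∀ s, w s ≤ C) :
    Summable fun s => μ s * w s :=
  (hμ.mul_right C).of_nonneg_of_le (fun s => mul_nonneg (hpos s) (hw s))
    (fun s => mul_le_mul_of_nonneg_left (hwC s) (hpos s))

lemma tsum_mul_le_tsum_mul (hpos : ∀ g, 0 ≤ μ g) (hμ : Summable μ)
    {a b : α → ℝ} {C : ℝ} (ha : ∀ s, 0 ≤ a s) (hab : ∀ s, a s ≤ b s) (hbC : ∀ s, b s ≤ C) :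
    ∑' s, μ s * a s ≤ ∑' s, μ s * b s :=
  have hb : Summable fun s => μ s * b s :=
    summable_mul_of_nonneg_of_le hpos hμ (fun s => (ha s).trans (hab s)) hbC
  Summable.tsum_le_tsum (fun s => mul_le_mul_of_nonneg_left (hab s) (hpos s))
    (hb.of_nonneg_of_le (fun s => mul_nonneg (hpos s) (ha s))
      (fun s => mul_le_mul_of_nonneg_left (hab s) (hpos s))) hb

end WeightedSums

section Convolution

variable {G : Type*} [Group G] {μ : G → ℝ}

lemma conv_nonneg (hpos : ∀ g, 0 ≤ μ g) {w : G → ℝ} (hw : 0 ≤ w) : 0 ≤ conv μ w :=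
  fun _ => tsum_nonneg fun s => mul_nonneg (hpos s) (hw _)

lemma conv_le_of_le (hpos : ∀ g, 0 ≤ μ g) (hsum : HasSum μ 1)
    {w : G → ℝ} {C : ℝ} (hw : 0 ≤ w) (hwC : ∀ x, w x ≤ C) (x : G) : conv μ w x ≤ C :=
  calc conv μ w x ≤ ∑' s, μ s * C :=
        tsum_mul_le_tsum_mul hpos hsum.summable (fun s => hw _) (fun s => hwC _) fun _ => le_rfl
    _ = C := by rw [tsum_mul_right, hsum.tsum_eq, one_mul]

lemma mapsTo_conv_nonneg_bounded (hpos : ∀ g, 0 ≤ μ g) (hsum : HasSum μ 1) (C : ℝ) :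
    Set.MapsTo (conv μ) {w | 0 ≤ w ∧ ∀ x, w x ≤ C} {w | 0 ≤ w ∧ ∀ x, w x ≤ C} :=
  fun _ ⟨hw, hwC⟩ => ⟨conv_nonneg hpos hw, conv_le_of_le hpos hsum hw hwC⟩

lemma convPow_nonneg (hpos : ∀ g, 0 ≤ μ g) (n : ℕ) : 0 ≤ convPow μ n := by
  induction n with
  | zero => intro g; simp only [convPow]; split <;> norm_num
  | succ n ih => exact conv_nonneg hpos ih

/-- The `g`-term of `μ*ⁿ v = Σ_g μ*ⁿ(g) · (g v)` is bounded by the whole sum. -/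
lemma convPow_mul_le_iterate_conv (hpos : ∀ g, 0 ≤ μ g) (hsum : HasSum μ 1)
    {v : G → ℝ} {C : ℝ} (hv : 0 ≤ v) (hvC : ∀ x, v x ≤ C) (n : ℕ) (g x : G) :
    convPow μ n g * v (g⁻¹ * x) ≤ (conv μ)^[n] v x := by
  induction n generalizing g x with
  | zero =>
    simp only [convPow, Function.iterate_zero, id]
    split
    · next h => subst h; simp
    · simpa using hv x
  | succ n ih =>
    have hiter := (mapsTo_conv_nonneg_bounded hpos hsum C).iterate n ⟨hv, hvC⟩
    calc convPow μ (n + 1) g * v (g⁻¹ * x)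
        = ∑' s, μ s * (convPow μ n (s⁻¹ * g) * v (g⁻¹ * x)) := by
          simp only [convPow, conv, ← tsum_mul_right, mul_assoc]
      _ ≤ ∑' s, μ s * (conv μ)^[n] v (s⁻¹ * x) := by
          refine tsum_mul_le_tsum_mul hpos hsum.summable
            (fun s => mul_nonneg (convPow_nonneg hpos n _) (hv _)) (fun s => ?_)
            (fun s => hiter.2 _)
          simpa [mul_assoc] using ih (s⁻¹ * g) (s⁻¹ * x)
      _ = (conv μ)^[n + 1] v x := by rw [Function.iterate_succ_apply']; rfl

lemma specRad_le_of_convPow_le (hpos : ∀ g, 0 ≤ μ g) {t : ℝ}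
    (h : ∀ n, convPow μ n 1 ≤ t ^ n) : specRad μ ≤ t := by
  have ht : 0 ≤ t := by simpa using (convPow_nonneg hpos 1 1).trans (h 1)
  refine Filter.limsup_le_of_le (Filter.isCoboundedUnder_le_of_le Filter.atTop (x := 0) fun n =>
    Real.rpow_nonneg (convPow_nonneg hpos n 1) _) ?_
  filter_upwards [Filter.eventually_ne_atTop 0] with n hn
  calc convPow μ n 1 ^ (n : ℝ)⁻¹ ≤ (t ^ n) ^ (n : ℝ)⁻¹ :=
        Real.rpow_le_rpow (convPow_nonneg hpos n 1) (h n) (by positivity)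
    _ = t := Real.pow_rpow_inv_natCast ht hn

end Convolution

section OrderedFunctional

variable {V : Type*} [AddCommGroup V] [Module ℝ V]

lemma subset_idealGen [PartialOrder V] (A : Set V) : A ⊆ idealGen A :=
  fun _ ha => Submodule.mem_sInf.mpr fun _ hW => hW.2 ha

lemma map_iterate_eq_pow {W : Submodule ℝ V} (J : W →ₗ[ℝ] ℝ) (T : V → V) {t : ℝ}
    (hJeig : ∀ (u : W) (hu : T u ∈ W), J ⟨T u, hu⟩ = t * J u)
    {v : V} (hmem : ∀ n, T^[n] v ∈ W) (hJv : J ⟨v, hmem 0⟩ = 1) (n : ℕ) :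
    J ⟨T^[n] v, hmem n⟩ = t ^ n := by
  induction n with
  | zero => exact hJv
  | succ n ih =>
    have hu : T (T^[n] v) ∈ W := Function.iterate_succ_apply' T n v ▸ hmem (n + 1)
    calc J ⟨T^[n + 1] v, hmem (n + 1)⟩ = J ⟨T (T^[n] v), hu⟩ := by
          congr 2; exact Function.iterate_succ_apply' T n v
      _ = t ^ (n + 1) := by rw [hJeig ⟨_, hmem n⟩ hu, ih, pow_succ']

lemma smul_map_le_map_of_smul_le [PartialOrder V] [IsOrderedAddMonoid V] {W : Submodule ℝ V}
    (J : W →ₗ[ℝ] ℝ) (hJpos : ∀ u : W, 0 ≤ (u : V) → 0 ≤ J u)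
    {u w : W} {c : ℝ} (h : c • (w : V) ≤ u) : c * J w ≤ J u := by
  have := hJpos (u - c • w) (by simpa [sub_nonneg] using h)
  rwa [map_sub, map_smul, smul_eq_mul, sub_nonneg] at this

end OrderedFunctional

theorem eigenvalue_ge_specRad_general {G : Type*} [Group G] (μ : G → ℝ)
    (hpos : ∀ g : G, 0 ≤ μ g) (hsum : HasSum μ 1)
    (v : G → ℝ) (hvbdd : ∃ C : ℝ, ∀ x, |v x| ≤ C) (hv : 0 ≤ v)
    (t : ℝ)
    (J : ↥(idealGen {f : G → ℝ | ∃ n : ℕ, f = (conv μ)^[n] v}) →ₗ[ℝ] ℝ)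
    (hJpos : ∀ u : ↥(idealGen {f : G → ℝ | ∃ n : ℕ, f = (conv μ)^[n] v}),
      0 ≤ (u : G → ℝ) → 0 ≤ J u)
    (hvmem : v ∈ idealGen {f : G → ℝ | ∃ n : ℕ, f = (conv μ)^[n] v})
    (hJv : J ⟨v, hvmem⟩ = 1)
    (hJeig : ∀ (u : ↥(idealGen {f : G → ℝ | ∃ n : ℕ, f = (conv μ)^[n] v}))
      (hu : conv μ (u : G → ℝ) ∈ idealGen {f : G → ℝ | ∃ n : ℕ, f = (conv μ)^[n] v}),
      J ⟨conv μ (u : G → ℝ), hu⟩ = t * J u) :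
    specRad μ ≤ t := by
  obtain ⟨C, hC⟩ := hvbdd
  have hmem : ∀ n, (conv μ)^[n] v ∈ idealGen {f : G → ℝ | ∃ n : ℕ, f = (conv μ)^[n] v} :=
    fun n => subset_idealGen _ ⟨n, rfl⟩
  refine specRad_le_of_convPow_le hpos fun n => ?_
  have hdom : convPow μ n 1 • v ≤ (conv μ)^[n] v := fun x => by
    simpa using convPow_mul_le_iterate_conv hpos hsum hv
      (fun y => (le_abs_self _).trans (hC y)) n 1 x
  simpa [hJv, map_iterate_eq_pow J (conv μ) hJeig hmem hJv n] using
    smul_map_le_map_of_smul_le J hJpos (u := ⟨_, hmem n⟩) (w := ⟨v, hvmem⟩) hdom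

/-- Let `μ` be a symmetric probability distribution on a group `G` and let `J` be a
positive linear functional, normalized at a nonzero bounded `v ≥ 0`, on the ideal
generated by the `μ`-orbit of `v`, satisfying `J(μ*u) = t·J(u)` for some `t ≤ 1`.
Then `t ≥ ρ(μ)`. -/
theorem eigenvalue_ge_specRad {G : Type*} [Group G] (μ : G → ℝ)
    (hpos : ∀ g : G, 0 ≤ μ g) (hsum : HasSum μ 1)
    (hsymm : ∀ g : G, μ g = μ g⁻¹)
    (v : G → ℝ) (hvbdd : ∃ C : ℝ, ∀ x, |v x| ≤ C) (hv : 0 ≤ v) (hv0 : v ≠ 0)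
    (t : ℝ) (ht : t ≤ 1)
    (J : ↥(idealGen {f : G → ℝ | ∃ n : ℕ, f = (conv μ)^[n] v}) →ₗ[ℝ] ℝ)
    (hJpos : ∀ u : ↥(idealGen {f : G → ℝ | ∃ n : ℕ, f = (conv μ)^[n] v}),
      0 ≤ (u : G → ℝ) → 0 ≤ J u)
    (hvmem : v ∈ idealGen {f : G → ℝ | ∃ n : ℕ, f = (conv μ)^[n] v})
    (hJv : J ⟨v, hvmem⟩ = 1)
    (hJeig : ∀ (u : ↥(idealGen {f : G → ℝ | ∃ n : ℕ, f = (conv μ)^[n] v}))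
      (hu : conv μ (u : G → ℝ) ∈ idealGen {f : G → ℝ | ∃ n : ℕ, f = (conv μ)^[n] v}),
      J ⟨conv μ (u : G → ℝ), hu⟩ = t * J u) :
    specRad μ ≤ t :=
  eigenvalue_ge_specRad_general μ hpos hsum v hvbdd hv t J hJpos hvmem hJv hJeig
end

section
/- Let P be a conditional mean on a vector lattice V and let v ∈ V⁺ be a nonzero self-majorizing element. Then for every u ∈ V⁺ the sequence n ↦ u ∧ (n·v) is eventually constant, and the formula P(u | v) := sup_n P(u ∧ n·v | v) extends P(· | v) to a positive linear functional on all of V. -/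
/-- A conditional mean on an ordered vector space `V`: a `[0,1]`-valued function
`P(u | v)` defined on pairs `0 ≤ u ≤ v ≠ 0`, additive in the first argument (CM1),
multiplicative along inclusions (CM2), and normalized (CM3).  It is encoded as a total
map whose axioms are imposed on its intended domain. -/
structure ConditionalMean (V : Type*) [AddCommGroup V] [PartialOrder V] [Module ℝ V] where
  P : V → V → ℝ
  nonneg : ∀ u v : V, 0 ≤ u → u ≤ v → v ≠ 0 → 0 ≤ P u v
  le_one : ∀ u v : V, 0 ≤ u → u ≤ v → v ≠ 0 → P u v ≤ 1
  add : ∀ u₁ u₂ w : V, 0 ≤ u₁ → 0 ≤ u₂ → u₁ + u₂ ≤ w → w ≠ 0 →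
      P (u₁ + u₂) w = P u₁ w + P u₂ w
  trans : ∀ u v w : V, 0 ≤ u → u ≤ v → v ≤ w → v ≠ 0 → P u w = P u v * P v w
  one : ∀ u : V, 0 ≤ u → u ≠ 0 → P u u = 1

section AuxCM

variable {V : Type*} [Lattice V] [AddCommGroup V]
    [CovariantClass V V (· + ·) (· ≤ ·)] [Module ℝ V] [PosSMulMono ℝ V]

/-- monotonicity of scaling in the scalar (for a nonnegative vector). -/
lemma cm_smul_le {a b : ℝ} (hab : a ≤ b) {x : V} (hx : 0 ≤ x) : a • x ≤ b • x := by
  have h : 0 ≤ (b - a) • x := smul_nonneg (by linarith) hx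
  calc a • x = a • x + 0 := by rw [add_zero]
    _ ≤ a • x + (b - a) • x := add_le_add_right h _
    _ = b • x := by rw [← add_smul]; congr 1; ring

/-- the Riesz subadditivity of `· ⊓ z` on nonnegative elements. -/
lemma cm_inf_add_le (a b z : V) (ha : 0 ≤ a) (hb : 0 ≤ b) (hz : 0 ≤ z) :
    (a + b) ⊓ z ≤ a ⊓ z + b ⊓ z := by
  have h1 : (a + b) ⊓ z ≤ (a ⊓ z) + b := by
    have e : (a ⊓ z) + b = (a + b) ⊓ (z + b) := by
      rw [add_comm (a ⊓ z) b, add_inf, add_comm b a, add_comm b z]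
    rw [e]
    exact le_inf inf_le_left (inf_le_right.trans (le_add_of_nonneg_right hb))
  have h2 : (a + b) ⊓ z ≤ (a ⊓ z) + z :=
    inf_le_right.trans (le_add_of_nonneg_left (le_inf ha hz))
  have h3 : (a + b) ⊓ z - a ⊓ z ≤ b ⊓ z :=
    le_inf (sub_le_iff_le_add'.2 h1) (sub_le_iff_le_add'.2 h2)
  exact sub_le_iff_le_add'.1 h3

/-- positive scaling distributes over `⊓`. -/
lemma cm_smul_inf {c : ℝ} (hc : 0 < c) (x y : V) : c • (x ⊓ y) = (c • x) ⊓ (c • y) := by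
  refine le_antisymm (le_inf (smul_le_smul_of_nonneg_left inf_le_left hc.le)
    (smul_le_smul_of_nonneg_left inf_le_right hc.le)) ?_
  have h : c⁻¹ • ((c • x) ⊓ (c • y)) ≤ x ⊓ y := by
    refine le_inf ?_ ?_
    · have := smul_le_smul_of_nonneg_left (inf_le_left : (c • x) ⊓ (c • y) ≤ c • x)
        (inv_nonneg.2 hc.le)
      rwa [smul_smul, inv_mul_cancel₀ hc.ne', one_smul] at this
    · have := smul_le_smul_of_nonneg_left (inf_le_right : (c • x) ⊓ (c • y) ≤ c • y)
        (inv_nonneg.2 hc.le)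
      rwa [smul_smul, inv_mul_cancel₀ hc.ne', one_smul] at this
  calc (c • x) ⊓ (c • y) = c • (c⁻¹ • ((c • x) ⊓ (c • y))) := by
        rw [smul_smul, mul_inv_cancel₀ hc.ne', one_smul]
    _ ≤ c • (x ⊓ y) := smul_le_smul_of_nonneg_left h hc.le

end AuxCM

/-- Let `P` be a conditional mean on a vector lattice `V` and `v ∈ V⁺` a nonzero
self-majorizing element.  Then for `u ∈ V⁺` the sequence `n ↦ u ⊓ n·v` is eventually
constant, and `P(· | v)` extends to a positive linear functional `J` on all of `V`
determined by the formula `J(u) = sup_n J(u ⊓ n·v)`. -/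
theorem conditionalMean_extend_selfMajorizing {V : Type*} [Lattice V] [AddCommGroup V]
    [CovariantClass V V (· + ·) (· ≤ ·)] [Module ℝ V] [PosSMulMono ℝ V]
    (P : ConditionalMean V) (v : V) (hv : 0 ≤ v) (hv0 : v ≠ 0)
    (hsm : ∀ u : V, ∃ lam : ℝ, ∀ n : ℕ, |u| ⊓ ((n : ℝ) • |v|) ≤ lam • |v|) :
    (∀ u : V, 0 ≤ u → ∃ N : ℕ, ∀ n : ℕ, N ≤ n →
      u ⊓ ((n : ℝ) • v) = u ⊓ ((N : ℝ) • v)) ∧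
    (∃ J : V →ₗ[ℝ] ℝ,
      (∀ u : V, 0 ≤ u → 0 ≤ J u) ∧
      (∀ u : V, 0 ≤ u → u ≤ v → J u = P.P u v) ∧
      (∀ u : V, 0 ≤ u → J u = ⨆ n : ℕ, J (u ⊓ ((n : ℝ) • v)))) := by
  classical
  have habs_v : |v| = v := abs_of_nonneg hv
  choose lam hlam using hsm
  obtain ⟨M, hMapp⟩ : ∃ M : V → ℕ, ∀ w, M w = ⌈max (lam w) 0⌉₊ := ⟨_, fun _ => rfl⟩
  -- The key bound `|w| ⊓ n•v ≤ (M w)•v`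
  have hM : ∀ w : V, ∀ n : ℕ, |w| ⊓ (n : ℝ) • v ≤ (M w : ℝ) • v := by
    intro w n
    have h1 := hlam w n
    rw [habs_v] at h1
    refine h1.trans (cm_smul_le ?_ hv)
    rw [hMapp w]
    exact (le_max_left _ _).trans (Nat.le_ceil _)
  -- real stabilization
  have hstab : ∀ w : V, 0 ≤ w → ∀ t : ℝ, (M w : ℝ) ≤ t →
      w ⊓ t • v = w ⊓ (M w : ℝ) • v := by
    intro w hw t ht
    have habsw : |w| = w := abs_of_nonneg hw
    apply le_antisymm
    · refine le_inf inf_le_left ?_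
      have h2 : w ⊓ t • v ≤ w ⊓ ((⌈t⌉₊ : ℝ)) • v :=
        le_inf inf_le_left (inf_le_right.trans (cm_smul_le (Nat.le_ceil t) hv))
      have h3 := hM w ⌈t⌉₊
      rw [habsw] at h3
      exact h2.trans h3
    · exact le_inf inf_le_left (inf_le_right.trans (cm_smul_le ht hv))
  obtain ⟨pb, hpbapp⟩ : ∃ pb : V → V, ∀ w, pb w = |w| ⊓ (M w : ℝ) • v := ⟨_, fun _ => rfl⟩
  have hpb_eq : ∀ w : V, 0 ≤ w → ∀ t : ℝ, (M w : ℝ) ≤ t → pb w = w ⊓ t • v := by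
    intro w hw t ht
    rw [hpbapp w, abs_of_nonneg hw, hstab w hw t ht]
  have hpb_nonneg : ∀ w, 0 ≤ pb w := fun w => by
    rw [hpbapp w]
    exact le_inf (abs_nonneg w) (smul_nonneg (Nat.cast_nonneg _) hv)
  have hpb_le : ∀ w, pb w ≤ (M w : ℝ) • v := fun w => by
    rw [hpbapp w]; exact inf_le_right
  have hpb_self : ∀ w : V, 0 ≤ w → ∀ K : ℝ, w ≤ K • v → pb w = w := by
    intro w hw K hK
    have h1 : pb w = w ⊓ (max (M w : ℝ) K) • v := hpb_eq w hw _ (le_max_left _ _)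
    rw [h1, inf_eq_left.2 (hK.trans (cm_smul_le (le_max_right _ _) hv))]
  have hnz : ∀ m : ℕ, 0 < m → ((m : ℝ)) • v ≠ 0 := by
    intro m hm h
    apply hv0
    have h2 : ((m : ℝ)⁻¹) • ((m : ℝ) • v) = v := by
      rw [smul_smul, inv_mul_cancel₀ (by positivity), one_smul]
    rw [h, smul_zero] at h2
    exact h2.symm
  have hP0 : ∀ w : V, 0 ≤ w → w ≠ 0 → P.P 0 w = 0 := by
    intro w hw hw0
    have h := P.add 0 0 w le_rfl le_rfl (by simpa using hw) hw0
    rw [add_zero] at h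
    linarith
  -- the value of P on multiples of v
  have hPj : ∀ m : ℕ, 0 < m → ∀ j : ℕ, j ≤ m →
      P.P ((j : ℝ) • v) ((m : ℝ) • v) = j / m := by
    intro m hm
    have hmnz := hnz m hm
    have hmv : (0 : V) ≤ (m : ℝ) • v := smul_nonneg (Nat.cast_nonneg _) hv
    have key : ∀ j : ℕ, j ≤ m → P.P ((j : ℝ) • v) ((m : ℝ) • v) = j * P.P v ((m : ℝ) • v) := by
      intro j
      induction j with
      | zero => intro _; simpa using hP0 _ hmv hmnz
      | succ j ih =>
        intro hj
        have hj' : j ≤ m := Nat.le_of_succ_le hj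
        have hcast : ((j + 1 : ℕ) : ℝ) • v = (j : ℝ) • v + v := by
          push_cast; rw [add_smul, one_smul]
        have hsum : (j : ℝ) • v + v ≤ (m : ℝ) • v := by
          rw [← hcast]; exact cm_smul_le (by exact_mod_cast hj) hv
        have h := P.add ((j : ℝ) • v) v ((m : ℝ) • v)
          (smul_nonneg (Nat.cast_nonneg _) hv) hv hsum hmnz
        rw [hcast, h, ih hj']
        push_cast; ring
    intro j hj
    have hone := P.one ((m : ℝ) • v) hmv hmnz
    have hm' := key m le_rfl
    rw [hone] at hm'
    have hmR : (0 : ℝ) < m := by exact_mod_cast hm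
    have hPv : P.P v ((m : ℝ) • v) = 1 / m := by
      field_simp
      linarith
    rw [key j hj, hPv]
    field_simp
  obtain ⟨g, hgapp⟩ : ∃ g : ℕ → V → ℝ, ∀ m a, g m a = (m : ℝ) * P.P a ((m : ℝ) • v) :=
    ⟨_, fun _ _ => rfl⟩
  have hgEq : ∀ m m' : ℕ, 0 < m → m ≤ m' → ∀ a : V, 0 ≤ a → a ≤ (m : ℝ) • v →
      g m' a = g m a := by
    intro m m' hm hmm' a ha ham
    have hm' : 0 < m' := lt_of_lt_of_le hm hmm'
    have htr := P.trans a ((m : ℝ) • v) ((m' : ℝ) • v) ha ham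
      (cm_smul_le (by exact_mod_cast hmm') hv) (hnz m hm)
    have hPmm : P.P ((m : ℝ) • v) ((m' : ℝ) • v) = m / m' := hPj m' hm' m hmm'
    rw [hgapp, hgapp, htr, hPmm]
    have hmR' : ((m' : ℝ)) ≠ 0 := by positivity
    field_simp
  obtain ⟨G, hGapp⟩ : ∃ G : V → ℝ, ∀ a, G a = g (M a + 1) (pb a) := ⟨_, fun _ => rfl⟩
  -- value of G on ideal elements
  have hGval : ∀ a : V, 0 ≤ a → ∀ k : ℕ, a ≤ (k : ℝ) • v → ∀ m : ℕ, 0 < m →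
      a ≤ (m : ℝ) • v → G a = g m a := by
    intro a ha k hk m hm ham
    have hpa : pb a = a := hpb_self a ha k hk
    have haM : a ≤ ((M a + 1 : ℕ) : ℝ) • v := by
      have h1 : a ≤ (M a : ℝ) • v := by
        have h0 := hpb_le a; rwa [hpa] at h0
      exact h1.trans (cm_smul_le (by exact_mod_cast Nat.le_succ (M a)) hv)
    rw [hGapp, hpa]
    have h1 := hgEq (M a + 1) (max (M a + 1) m) (Nat.succ_pos _) (le_max_left _ _) a ha haM
    have h2 := hgEq m (max (M a + 1) m) hm (le_max_right _ _) a ha ham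
    rw [← h1]; exact h2
  have hGadd : ∀ a b : V, ∀ ka kb : ℕ, 0 ≤ a → 0 ≤ b → a ≤ (ka : ℝ) • v →
      b ≤ (kb : ℝ) • v → G (a + b) = G a + G b := by
    intro a b ka kb ha hb hka hkb
    have hm : 0 < ka + kb + 1 := Nat.succ_pos _
    have ham : a ≤ ((ka + kb + 1 : ℕ) : ℝ) • v :=
      hka.trans (cm_smul_le (by exact_mod_cast Nat.le_add_right ka (kb + 1)) hv)
    have hbm : b ≤ ((ka + kb + 1 : ℕ) : ℝ) • v := by
      refine hkb.trans (cm_smul_le ?_ hv)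
      exact_mod_cast Nat.le_add_left kb (ka) |>.trans (Nat.le_succ _)
    have hsum : a + b ≤ ((ka + kb + 1 : ℕ) : ℝ) • v := by
      have h1 : a + b ≤ ((ka : ℝ) + (kb : ℝ)) • v := by
        rw [add_smul]; exact add_le_add hka hkb
      refine h1.trans (cm_smul_le ?_ hv)
      push_cast; linarith
    rw [hGval (a + b) (add_nonneg ha hb) (ka + kb + 1) hsum (ka + kb + 1) hm hsum,
      hGval a ha ka hka (ka + kb + 1) hm ham,
      hGval b hb kb hkb (ka + kb + 1) hm hbm,
      hgapp, hgapp, hgapp,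
      P.add a b (((ka + kb + 1 : ℕ) : ℝ) • v) ha hb hsum (hnz _ hm)]
    ring
  have hG0 : G 0 = 0 := by
    have h := hGadd 0 0 0 0 le_rfl le_rfl (by simp) (by simp)
    rw [add_zero] at h
    linarith
  have hGnn : ∀ a : V, ∀ k : ℕ, 0 ≤ a → a ≤ (k : ℝ) • v → 0 ≤ G a := by
    intro a k ha hk
    have hm : 0 < k + 1 := Nat.succ_pos _
    have hk' : a ≤ ((k + 1 : ℕ) : ℝ) • v :=
      hk.trans (cm_smul_le (by exact_mod_cast Nat.le_succ k) hv)
    rw [hGval a ha (k + 1) hk' (k + 1) hm hk', hgapp]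
    exact mul_nonneg (Nat.cast_nonneg _) (P.nonneg a _ ha hk' (hnz _ hm))
  have hGmono : ∀ a b : V, ∀ ka kb : ℕ, 0 ≤ a → 0 ≤ b → a ≤ (ka : ℝ) • v →
      b ≤ (kb : ℝ) • v → a ≤ b → G a ≤ G b := by
    intro a b ka kb ha hb hka hkb hab
    have hba : 0 ≤ b - a := sub_nonneg.2 hab
    have hbk : b - a ≤ (kb : ℝ) • v := (sub_le_self b ha).trans hkb
    have h := hGadd a (b - a) ka kb ha hba hka hbk
    have h2 : a + (b - a) = b := by abel
    rw [h2] at h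
    have h3 := hGnn (b - a) kb hba hbk
    linarith
  have hGnat : ∀ kk : ℕ, ∀ a : V, ∀ ka : ℕ, 0 ≤ a → a ≤ (ka : ℝ) • v →
      G ((kk : ℝ) • a) = kk * G a := by
    intro kk a ka ha hka
    induction kk with
    | zero => simp [hG0]
    | succ n ih =>
      have hna : 0 ≤ (n : ℝ) • a := smul_nonneg (Nat.cast_nonneg _) ha
      have hnk : (n : ℝ) • a ≤ ((n * ka : ℕ) : ℝ) • v := by
        calc (n : ℝ) • a ≤ (n : ℝ) • ((ka : ℝ) • v) :=
              smul_le_smul_of_nonneg_left hka (Nat.cast_nonneg _)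
          _ = ((n * ka : ℕ) : ℝ) • v := by rw [smul_smul]; push_cast; ring_nf
      have hcast : ((n + 1 : ℕ) : ℝ) • a = (n : ℝ) • a + a := by
        push_cast; rw [add_smul, one_smul]
      rw [hcast, hGadd ((n : ℝ) • a) a (n * ka) ka hna ha hnk hka, ih]
      push_cast; ring
  have hGrat : ∀ q : ℚ, 0 ≤ q → ∀ a : V, ∀ ka : ℕ, 0 ≤ a → a ≤ (ka : ℝ) • v →
      G ((q : ℝ) • a) = q * G a := by
    intro q hq a ka ha hka
    have hqR : (0 : ℝ) ≤ (q : ℝ) := by exact_mod_cast hq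
    have hdR : (0 : ℝ) < (q.den : ℝ) := by exact_mod_cast q.pos
    have hqa : 0 ≤ (q : ℝ) • a := smul_nonneg hqR ha
    have hqbound : (q : ℝ) • a ≤ ((⌈(q : ℝ) * (ka : ℝ)⌉₊ : ℕ) : ℝ) • v := by
      calc (q : ℝ) • a ≤ (q : ℝ) • ((ka : ℝ) • v) := smul_le_smul_of_nonneg_left hka hqR
        _ = ((q : ℝ) * (ka : ℝ)) • v := by rw [smul_smul]
        _ ≤ ((⌈(q : ℝ) * (ka : ℝ)⌉₊ : ℕ) : ℝ) • v := cm_smul_le (Nat.le_ceil _) hv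
    have hnum : ((q.num.toNat : ℕ) : ℝ) = (q.den : ℝ) * (q : ℝ) := by
      have hd0 : ((q.den : ℚ)) ≠ 0 := by exact_mod_cast q.den_nz
      have h1 : (q.num : ℚ) = q * q.den := (div_eq_iff hd0).mp (Rat.num_div_den q)
      have h2 : (q.num.toNat : ℤ) = q.num := Int.toNat_of_nonneg (Rat.num_nonneg.2 hq)
      have h3 : ((q.num.toNat : ℕ) : ℚ) = q * q.den := by
        rw [← h1]; exact_mod_cast congrArg (Int.cast : ℤ → ℚ) h2
      have h4 : ((q.num.toNat : ℕ) : ℝ) = ((q * q.den : ℚ) : ℝ) := by exact_mod_cast h3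
      rw [h4]; push_cast; ring
    have h1 : (q.den : ℝ) • ((q : ℝ) • a) = ((q.num.toNat : ℕ) : ℝ) • a := by
      rw [smul_smul, hnum]
    have h2 := hGnat q.den ((q : ℝ) • a) ⌈(q : ℝ) * (ka : ℝ)⌉₊ hqa hqbound
    rw [h1, hGnat q.num.toNat a ka ha hka] at h2
    -- h2 : (num.toNat) * G a = den * G (q • a)
    have h5 : G ((q : ℝ) • a) = ((q.num.toNat : ℕ) : ℝ) / (q.den : ℝ) * G a := by
      field_simp
      linarith
    rw [h5, hnum]
    field_simp
  have hGreal : ∀ c : ℝ, 0 ≤ c → ∀ a : V, ∀ ka : ℕ, 0 ≤ a → a ≤ (ka : ℝ) • v →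
      G (c • a) = c * G a := by
    intro c hc a ka ha hka
    rcases eq_or_lt_of_le hc with hc0 | hcpos
    · rw [← hc0]; simp [hG0]
    have hGa := hGnn a ka ha hka
    have hmono : ∀ x y : ℝ, 0 ≤ x → x ≤ y → G (x • a) ≤ G (y • a) := by
      intro x y hx hxy
      have hy : 0 ≤ y := hx.trans hxy
      refine hGmono (x • a) (y • a) ⌈x * (ka : ℝ)⌉₊ ⌈y * (ka : ℝ)⌉₊
        (smul_nonneg hx ha) (smul_nonneg hy ha) ?_ ?_ (cm_smul_le hxy ha)
      · calc x • a ≤ x • ((ka : ℝ) • v) := smul_le_smul_of_nonneg_left hka hx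
          _ = (x * (ka : ℝ)) • v := by rw [smul_smul]
          _ ≤ _ := cm_smul_le (Nat.le_ceil _) hv
      · calc y • a ≤ y • ((ka : ℝ) • v) := smul_le_smul_of_nonneg_left hka hy
          _ = (y * (ka : ℝ)) • v := by rw [smul_smul]
          _ ≤ _ := cm_smul_le (Nat.le_ceil _) hv
    have hub : ∀ q : ℚ, c ≤ (q : ℝ) → G (c • a) ≤ (q : ℝ) * G a := by
      intro q hq
      have hq0 : (0 : ℚ) ≤ q := by exact_mod_cast hc.trans hq
      rw [← hGrat q hq0 a ka ha hka]
      exact hmono c q hc hq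
    have hlb : ∀ q : ℚ, 0 ≤ q → (q : ℝ) ≤ c → (q : ℝ) * G a ≤ G (c • a) := by
      intro q hq hqc
      rw [← hGrat q hq a ka ha hka]
      exact hmono q c (by exact_mod_cast hq) hqc
    have hGa1 : (0 : ℝ) < G a + 1 := by linarith
    apply le_antisymm
    · refine le_of_forall_pos_le_add ?_
      intro ε hε
      obtain ⟨q, hq1, hq2⟩ := exists_rat_btwn (lt_add_of_pos_right c (div_pos hε hGa1))
      have h1 := hub q hq1.le
      have hδpos : (0:ℝ) ≤ ε / (G a + 1) := div_nonneg hε.le hGa1.le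
      have e1 : (q : ℝ) * G a ≤ (c + ε / (G a + 1)) * G a :=
        mul_le_mul_of_nonneg_right hq2.le hGa
      have e2 : ε / (G a + 1) * G a ≤ ε / (G a + 1) * (G a + 1) :=
        mul_le_mul_of_nonneg_left (by linarith) hδpos
      have e3 : ε / (G a + 1) * (G a + 1) = ε := div_mul_cancel₀ _ hGa1.ne'
      nlinarith [h1, e1, e2, e3]
    · refine le_of_forall_pos_le_add ?_
      intro ε hε
      have hlt : max 0 (c - ε / (G a + 1)) < c :=
        max_lt hcpos (sub_lt_self c (div_pos hε hGa1))
      obtain ⟨q, hq1, hq2⟩ := exists_rat_btwn hlt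
      have hq0 : (0 : ℚ) ≤ q := by
        have := (le_max_left 0 (c - ε / (G a + 1))).trans_lt hq1
        exact_mod_cast this.le
      have h1 := hlb q hq0 hq2.le
      have h2 : c - ε / (G a + 1) < (q : ℝ) :=
        (le_max_right 0 (c - ε / (G a + 1))).trans_lt hq1
      have hδpos : (0:ℝ) ≤ ε / (G a + 1) := div_nonneg hε.le hGa1.le
      have e1 : (c - ε / (G a + 1)) * G a ≤ (q : ℝ) * G a :=
        mul_le_mul_of_nonneg_right h2.le hGa
      have e2 : ε / (G a + 1) * G a ≤ ε / (G a + 1) * (G a + 1) :=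
        mul_le_mul_of_nonneg_left (by linarith) hδpos
      have e3 : ε / (G a + 1) * (G a + 1) = ε := div_mul_cancel₀ _ hGa1.ne'
      nlinarith [h1, e1, e2, e3]
  -- additivity and positive homogeneity of the band projection
  have hpb_add : ∀ a b : V, 0 ≤ a → 0 ≤ b → pb (a + b) = pb a + pb b := by
    intro a b ha hb
    have hab : 0 ≤ a + b := add_nonneg ha hb
    have hna : (M a : ℝ) ≤ ((M a + M b + M (a + b) : ℕ) : ℝ) := by
      exact_mod_cast Nat.le_add_right (M a) (M b + M (a + b)) |>.trans (by omega)
    have hnb : (M b : ℝ) ≤ ((M a + M b + M (a + b) : ℕ) : ℝ) := by exact_mod_cast by omega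
    have hnab : (M (a + b) : ℝ) ≤ ((M a + M b + M (a + b) : ℕ) : ℝ) := by
      exact_mod_cast by omega
    set n : ℕ := M a + M b + M (a + b) with hn
    have h1 : pb (a + b) = (a + b) ⊓ (n : ℝ) • v := hpb_eq (a + b) hab n hnab
    have h2 : pb a = a ⊓ (n : ℝ) • v := hpb_eq a ha n hna
    have h3 : pb b = b ⊓ (n : ℝ) • v := hpb_eq b hb n hnb
    have hnv : (0 : V) ≤ (n : ℝ) • v := smul_nonneg (Nat.cast_nonneg _) hv
    apply le_antisymm
    · rw [h1, h2, h3]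
      exact cm_inf_add_le a b ((n : ℝ) • v) ha hb hnv
    · have h4 : pb (a + b) = (a + b) ⊓ ((2 * n : ℕ) : ℝ) • v := by
        refine hpb_eq (a + b) hab _ ?_
        exact_mod_cast by omega
      rw [h4, h2, h3]
      refine le_inf (add_le_add inf_le_left inf_le_left) ?_
      calc a ⊓ (n : ℝ) • v + b ⊓ (n : ℝ) • v ≤ (n : ℝ) • v + (n : ℝ) • v :=
            add_le_add inf_le_right inf_le_right
        _ = ((2 * n : ℕ) : ℝ) • v := by rw [← add_smul]; push_cast; ring_nf
  have hpb_smul : ∀ c : ℝ, 0 < c → ∀ a : V, 0 ≤ a → pb (c • a) = c • pb a := by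
    intro c hc a ha
    have hca : 0 ≤ c • a := smul_nonneg hc.le ha
    have ht1 : (M (c • a) : ℝ) ≤ max (M (c • a) : ℝ) (c * (M a : ℝ)) := le_max_left _ _
    have ht2 : (M a : ℝ) ≤ max (M (c • a) : ℝ) (c * (M a : ℝ)) / c := by
      rw [le_div_iff₀ hc]
      calc (M a : ℝ) * c = c * (M a : ℝ) := by ring
        _ ≤ _ := le_max_right _ _
    have h1 : pb (c • a) = (c • a) ⊓ (max (M (c • a) : ℝ) (c * (M a : ℝ))) • v :=
      hpb_eq (c • a) hca _ ht1
    have h2 : c • pb a = (c • a) ⊓ (max (M (c • a) : ℝ) (c * (M a : ℝ))) • v := by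
      rw [hpb_eq a ha _ ht2, cm_smul_inf hc, smul_smul,
        mul_div_cancel₀ _ hc.ne']
    rw [h1, h2]
  -- G is insensitive to the band projection
  have hGpb : ∀ w : V, G (pb w) = G w := by
    intro w
    have hle : pb w ≤ ((M w + 1 : ℕ) : ℝ) • v :=
      (hpb_le w).trans (cm_smul_le (by exact_mod_cast Nat.le_succ (M w)) hv)
    have h1 : G (pb w) = g (M w + 1) (pb w) :=
      hGval (pb w) (hpb_nonneg w) (M w + 1) hle (M w + 1) (Nat.succ_pos _) hle
    rw [h1, hGapp]
  have hGadd' : ∀ a b : V, 0 ≤ a → 0 ≤ b → G (a + b) = G a + G b := by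
    intro a b ha hb
    rw [← hGpb (a + b), ← hGpb a, ← hGpb b, hpb_add a b ha hb]
    exact hGadd (pb a) (pb b) (M a) (M b) (hpb_nonneg a) (hpb_nonneg b) (hpb_le a) (hpb_le b)
  have hGnn' : ∀ a : V, 0 ≤ a → 0 ≤ G a := by
    intro a ha
    rw [← hGpb a]
    exact hGnn (pb a) (M a) (hpb_nonneg a) (hpb_le a)
  have hGsmul' : ∀ c : ℝ, 0 ≤ c → ∀ a : V, 0 ≤ a → G (c • a) = c * G a := by
    intro c hc a ha
    rcases eq_or_lt_of_le hc with hc0 | hcpos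
    · rw [← hc0]; simp [hG0]
    rw [← hGpb (c • a), hpb_smul c hcpos a ha,
      hGreal c hc (pb a) (M a) (hpb_nonneg a) (hpb_le a), hGpb a]
  -- the linear functional
  obtain ⟨J0, hJ0⟩ : ∃ J0 : V → ℝ, ∀ u, J0 u = G (u⁺) - G (u⁻) := ⟨_, fun _ => rfl⟩
  have hdecomp : ∀ u a b : V, 0 ≤ a → 0 ≤ b → u = a - b → J0 u = G a - G b := by
    intro u a b ha hb huab
    have h2 : u⁺ - u⁻ = a - b := (posPart_sub_negPart u).trans huab
    have h4 : u⁺ + b = a + u⁻ := sub_eq_sub_iff_add_eq_add.mp h2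
    have h5 := hGadd' a (u⁻) ha (negPart_nonneg u)
    have h6 := hGadd' (u⁺) b (posPart_nonneg u) hb
    have h7 : G (u⁺ + b) = G (a + u⁻) := by rw [h4]
    rw [h5, h6] at h7
    rw [hJ0 u]
    linarith
  have hJ0pos : ∀ w : V, 0 ≤ w → J0 w = G w := by
    intro w hw
    rw [hJ0 w, posPart_eq_self.mpr hw, negPart_eq_zero.mpr hw, hG0, sub_zero]
  have hJadd : ∀ x y : V, J0 (x + y) = J0 x + J0 y := by
    intro x y
    have hxy : x + y = (x⁺ + y⁺) - (x⁻ + y⁻) := by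
      conv_lhs => rw [← posPart_sub_negPart x, ← posPart_sub_negPart y]
      abel
    rw [hdecomp (x + y) (x⁺ + y⁺) (x⁻ + y⁻)
        (add_nonneg (posPart_nonneg x) (posPart_nonneg y))
        (add_nonneg (negPart_nonneg x) (negPart_nonneg y)) hxy,
      hGadd' _ _ (posPart_nonneg x) (posPart_nonneg y),
      hGadd' _ _ (negPart_nonneg x) (negPart_nonneg y),
      hJ0 x, hJ0 y]
    ring
  have hJsmul : ∀ c : ℝ, ∀ x : V, J0 (c • x) = c * J0 x := by
    intro c x
    rcases le_or_gt 0 c with hc | hc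
    · have hd : c • x = (c • x⁺) - (c • x⁻) := by
        conv_lhs => rw [← posPart_sub_negPart x]
        rw [smul_sub]
      rw [hdecomp (c • x) _ _ (smul_nonneg hc (posPart_nonneg x))
          (smul_nonneg hc (negPart_nonneg x)) hd,
        hGsmul' c hc _ (posPart_nonneg x), hGsmul' c hc _ (negPart_nonneg x), hJ0 x]
      ring
    · have hc' : (0 : ℝ) ≤ -c := by linarith
      have hd : c • x = ((-c) • x⁻) - ((-c) • x⁺) := by
        conv_lhs => rw [← posPart_sub_negPart x]
        rw [smul_sub, neg_smul, neg_smul]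
        abel
      rw [hdecomp (c • x) _ _ (smul_nonneg hc' (negPart_nonneg x))
          (smul_nonneg hc' (posPart_nonneg x)) hd,
        hGsmul' (-c) hc' _ (negPart_nonneg x), hGsmul' (-c) hc' _ (posPart_nonneg x), hJ0 x]
      ring
  refine ⟨?_, ?_⟩
  · -- eventual constancy
    intro u hu
    refine ⟨M u, fun n hn => ?_⟩
    exact hstab u hu (n : ℝ) (by exact_mod_cast hn)
  · refine ⟨{ toFun := J0
              map_add' := hJadd
              map_smul' := fun c x => by simpa using hJsmul c x }, ?_, ?_, ?_⟩
    · -- positivity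
      intro u hu
      show (0 : ℝ) ≤ J0 u
      rw [hJ0pos u hu]
      exact hGnn' u hu
    · -- extension of P(·|v)
      intro u hu huv
      show J0 u = P.P u v
      have h1v : u ≤ ((1 : ℕ) : ℝ) • v := by
        rw [Nat.cast_one, one_smul]; exact huv
      rw [hJ0pos u hu, hGval u hu 1 h1v 1 one_pos h1v, hgapp]
      rw [Nat.cast_one, one_smul, one_mul]
    · -- the sup formula
      intro u hu
      show J0 u = ⨆ n : ℕ, J0 (u ⊓ (n : ℝ) • v)
      have habsu : |u| = u := abs_of_nonneg hu
      have hwnn : ∀ n : ℕ, 0 ≤ u ⊓ (n : ℝ) • v := fun n =>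
        le_inf hu (smul_nonneg (Nat.cast_nonneg _) hv)
      have hple : ∀ n : ℕ, u ⊓ (n : ℝ) • v ≤ pb u := by
        intro n
        rw [hpbapp u, habsu]
        refine le_inf inf_le_left ?_
        have h := hM u n
        rw [habsu] at h
        exact h
      have hub : ∀ n : ℕ, J0 (u ⊓ (n : ℝ) • v) ≤ J0 u := by
        intro n
        rw [hJ0pos _ (hwnn n), hJ0pos u hu, ← hGpb u]
        exact hGmono _ _ n (M u) (hwnn n) (hpb_nonneg u) inf_le_right (hpb_le u) (hple n)
      have heq : J0 (u ⊓ ((M u : ℕ) : ℝ) • v) = J0 u := by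
        rw [hJ0pos _ (hwnn (M u)), hJ0pos u hu, ← hGpb u]
        congr 1
        rw [hpbapp u, habsu]
      refine le_antisymm ?_ (ciSup_le hub)
      rw [← heq]
      refine le_ciSup (f := fun n : ℕ => J0 (u ⊓ (n : ℝ) • v)) ⟨J0 u, ?_⟩ (M u)
      rintro x ⟨n, rfl⟩
      exact hub n
end
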